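/- arXiv:math/9810100 — 2 statements merged into one kernel-verified Lean document; each statement's English description precedes it below -/
import Mathlib

section
/- Let n ≥ 1 and let R₀ : Matrix (Fin n) (Fin (n+1)) ℕ be the column subdivision matrix with R₀ 0 0 = R₀ 0 1 = 1, R₀ i (i+1) = 1 for i ≠ 0, and all other entries 0. Suppose S : Matrix (Fin (n+1)) (Fin n) ℕ is such that B := R₀ * S and C := S * R₀ are both 0-1 matrices. Then: (i) B i j = C (i+1) (j+1) for all i, j : Fin n with i ≠ 0 (indices of C taken via the successor embedding Fin n → Fin (n+1)); (ii) C i 0 = C i 1 for every i : Fin (n+1); and (iii) C 0 j + C 1 j ≤ 1 for every j : Fin (n+1). -/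
/-!
`R0 n` is the incidence matrix of the column map `Fin.predAbove 0 : j ↦ j - 1` (so `0, 1 ↦ 0`).
Hence `S * R0 n` is `S` with its column `0` repeated, i.e. `(S * R0 n) i j = S i (j - 1)`, while
`R0 n * S` is `S` with its rows `0` and `1` added up. All three claims are read off from these
two descriptions; for (iii), `S 0 k + S 1 k` is an entry of the 0-1 matrix `R0 n * S`.
-/

/-- A 0-1 matrix. -/
def IsZeroOne {α β : Type*} (B : Matrix α β ℕ) : Prop := ∀ i j, B i j = 0 ∨ B i j = 1

/-- The column subdivision matrix `R₀` with `R₀ 0 0 = R₀ 0 1 = 1`, `R₀ i (i+1) = 1` for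
`i ≠ 0`, and all other entries `0`. -/
def R0 (n : ℕ) : Matrix (Fin n) (Fin (n + 1)) ℕ :=
  Matrix.of fun i j =>
    if ((i : ℕ) = 0 ∧ ((j : ℕ) = 0 ∨ (j : ℕ) = 1)) ∨ ((i : ℕ) ≠ 0 ∧ (j : ℕ) = (i : ℕ) + 1)
    then 1 else 0

open Matrix

theorem IsZeroOne.le_one {α β : Type*} {B : Matrix α β ℕ} (hB : IsZeroOne B) (i : α) (j : β) :
    B i j ≤ 1 :=
  (hB i j).elim (fun h => h ▸ zero_le_one) le_of_eq

section

variable {n : ℕ} [NeZero n]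

theorem R0_eq_one_submatrix :
    R0 n = (1 : Matrix (Fin n) (Fin n) ℕ).submatrix id (Fin.predAbove 0) := by
  ext i j
  have hval : ((Fin.predAbove 0 j : Fin n) : ℕ) = j - 1 := by
    rw [Fin.predAbove_zero]
    split_ifs with hj <;> simp [hj]
  rw [R0, of_apply, submatrix_apply, one_apply, id]
  exact if_congr (by rw [Fin.ext_iff, hval]; omega) rfl rfl

theorem mul_R0 {l : Type*} (S : Matrix l (Fin n) ℕ) :
    S * R0 n = S.submatrix id (Fin.predAbove 0) := by
  rw [R0_eq_one_submatrix, ← Equiv.coe_refl, mul_submatrix_one]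
  rfl

theorem R0_mul_apply {γ : Type*} (S : Matrix (Fin (n + 1)) γ ℕ) (i : Fin n) (j : γ) :
    (R0 n * S) i j = (if i = 0 then S 0 j else 0) + S i.succ j := by
  rw [R0_eq_one_submatrix, mul_apply, Fin.sum_univ_succ]
  simp [one_apply]

end

theorem stmt_17_general (n : ℕ) (hn : 1 ≤ n) (S : Matrix (Fin (n + 1)) (Fin n) ℕ)
    (hB : IsZeroOne (R0 n * S)) :
    (∀ (i j : Fin n), i ≠ ⟨0, hn⟩ →
        (R0 n * S) i j = (S * R0 n) (Fin.succ i) (Fin.succ j)) ∧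
    (∀ i : Fin (n + 1), (S * R0 n) i 0 = (S * R0 n) i 1) ∧
    (∀ j : Fin (n + 1), (S * R0 n) 0 j + (S * R0 n) 1 j ≤ 1) := by
  have : NeZero n := ⟨by omega⟩
  simp only [mul_R0, submatrix_apply, id]
  refine ⟨fun i j hi0 => ?_, fun i => ?_, fun j => ?_⟩
  · have hi : i ≠ 0 := fun h => hi0 (Fin.ext (by simp [h]))
    simp [R0_mul_apply, hi]
  · congr 1
    ext
    simp [Nat.mod_eq_of_lt (show 1 < n + 1 by omega)]
  · calc S 0 (Fin.predAbove 0 j) + S 1 (Fin.predAbove 0 j)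
          = (R0 n * S) 0 (Fin.predAbove 0 j) := by simp [R0_mul_apply]
      _ ≤ 1 := hB.le_one _ _

theorem stmt_17 (n : ℕ) (hn : 1 ≤ n) (S : Matrix (Fin (n + 1)) (Fin n) ℕ)
    (hB : IsZeroOne (R0 n * S)) (hC : IsZeroOne (S * R0 n)) :
    (∀ (i j : Fin n), i ≠ ⟨0, hn⟩ →
        (R0 n * S) i j = (S * R0 n) (Fin.succ i) (Fin.succ j)) ∧
    (∀ i : Fin (n + 1), (S * R0 n) i 0 = (S * R0 n) i 1) ∧
    (∀ j : Fin (n + 1), (S * R0 n) 0 j + (S * R0 n) 1 j ≤ 1) :=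
  stmt_17_general n hn S hB
end

section
/- Let B : Matrix (Fin 2) (Fin 2) ℕ have rows (1,1), (0,0), let C : Matrix (Fin 3) (Fin 3) ℕ have rows (1,1,1), (0,0,0), (0,0,0), let R : Matrix (Fin 2) (Fin 3) ℕ have rows (1,1,1), (0,0,0), and let S : Matrix (Fin 3) (Fin 2) ℕ have rows (1,0), (0,1), (0,0). Then B = R * S, C = S * R, and R is column subdivision; nevertheless C is not, up to relabeling, a vertex explosion of B: there do not exist v : Fin 2, a partition supp(B v) = M₁ ⊔ M₂ into nonempty sets, and a bijection τ : Fin 3 ≃ ({u : Fin 2 | u ≠ v} ⊕ {v′, v″}) with C i j = C₀ (τ i) (τ j) for all i, j, where C₀ is the vertex explosion of B at v with respect to (M₁, M₂). -/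
/-- A column subdivision matrix: a 0-1 matrix each of whose columns contains at most one
nonzero entry. -/
def IsColumnSubdivision {α β : Type*} (R : Matrix α β ℕ) : Prop :=
  IsZeroOne R ∧ ∀ j i i', R i j ≠ 0 → R i' j ≠ 0 → i = i'

open Classical in
/-- The vertex explosion of `B` at `v` with respect to `(M₁, M₂)`; the vertex `v` is split
into `v′ = Sum.inr 0` and `v″ = Sum.inr 1`. -/
noncomputable def vertexExplosion {V : Type*} (B : Matrix V V ℕ) (v : V) (M₁ M₂ : Set V) :
    ({u : V // u ≠ v} ⊕ Fin 2) → ({u : V // u ≠ v} ⊕ Fin 2) → ℕ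
  | Sum.inl u, Sum.inl w => B u.1 w.1
  | Sum.inl u, Sum.inr _ => B u.1 v
  | Sum.inr a, Sum.inl w => if (a = 0 ∧ w.1 ∈ M₁) ∨ (a = 1 ∧ w.1 ∈ M₂) then 1 else 0
  | Sum.inr a, Sum.inr _ => if (a = 0 ∧ v ∈ M₁) ∨ (a = 1 ∧ v ∈ M₂) then 1 else 0

/-- The matrix `B` with rows `(1,1), (0,0)`. -/
def B : Matrix (Fin 2) (Fin 2) ℕ := !![1,1; 0,0]

/-- The matrix `C` with rows `(1,1,1), (0,0,0), (0,0,0)`. -/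
def C : Matrix (Fin 3) (Fin 3) ℕ := !![1,1,1; 0,0,0; 0,0,0]

/-- The matrix `R` with rows `(1,1,1), (0,0,0)`. -/
def R : Matrix (Fin 2) (Fin 3) ℕ := !![1,1,1; 0,0,0]

/-- The matrix `S` with rows `(1,0), (0,1), (0,0)`. -/
def S : Matrix (Fin 3) (Fin 2) ℕ := !![1,0; 0,1; 0,0]


section VertexExplosion

variable {V : Type*} (A : Matrix V V ℕ) (v : V) (M₁ M₂ : Set V)

lemma vertexExplosion_inl_exists_eq_zero (u : {u : V // u ≠ v}) {w : V} (hw : A u w = 0) :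
    ∃ s, vertexExplosion A v M₁ M₂ (Sum.inl u) s = 0 := by
  by_cases hwv : w = v
  · subst hwv
    exact ⟨Sum.inr 0, hw⟩
  · exact ⟨Sum.inl ⟨w, hwv⟩, hw⟩

lemma vertexExplosion_inr_zero_exists_eq_zero {y : V} (hy : y ∉ M₁) :
    ∃ s, vertexExplosion A v M₁ M₂ (Sum.inr 0) s = 0 := by
  by_cases hyv : y = v
  · subst hyv
    exact ⟨Sum.inr 0, by simp [vertexExplosion, hy]⟩
  · exact ⟨Sum.inl ⟨y, hyv⟩, by simp [vertexExplosion, hy]⟩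

lemma vertexExplosion_inr_one_exists_eq_zero {y : V} (hy : y ∉ M₂) :
    ∃ s, vertexExplosion A v M₁ M₂ (Sum.inr 1) s = 0 := by
  by_cases hyv : y = v
  · subst hyv
    exact ⟨Sum.inr 0, by simp [vertexExplosion, hy]⟩
  · exact ⟨Sum.inl ⟨y, hyv⟩, by simp [vertexExplosion, hy]⟩

lemma vertexExplosion_exists_eq_zero (hA : ∀ u ≠ v, ∃ w, A u w = 0)
    (h₁ : M₁.Nonempty) (h₂ : M₂.Nonempty) (hdisj : Disjoint M₁ M₂) :
    ∀ r, ∃ s, vertexExplosion A v M₁ M₂ r s = 0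
  | Sum.inl u =>
    have ⟨_, hw⟩ := hA u u.2
    vertexExplosion_inl_exists_eq_zero A v M₁ M₂ u hw
  | Sum.inr a => by
    obtain ⟨x, hx⟩ := h₁
    obtain ⟨y, hy⟩ := h₂
    fin_cases a
    · exact vertexExplosion_inr_zero_exists_eq_zero A v M₁ M₂ (hdisj.notMem_of_mem_right hy)
    · exact vertexExplosion_inr_one_exists_eq_zero A v M₁ M₂ (hdisj.notMem_of_mem_left hx)

end VertexExplosion

lemma Matrix.exists_eq_zero_of_forall_exists_eq_zero_reindex {m n α : Type*} [Zero α]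
    {A : Matrix m m α} {A' : Matrix n n α} (τ : m ≃ n) (hA : ∀ i j, A i j = A' (τ i) (τ j))
    (hA' : ∀ r, ∃ s, A' r s = 0) (i : m) : ∃ j, A i j = 0 := by
  obtain ⟨s, hs⟩ := hA' (τ i)
  exact ⟨τ.symm s, by rw [hA, τ.apply_symm_apply, hs]⟩

lemma B_one_ne_one (w : Fin 2) : B 1 w ≠ 1 := by
  fin_cases w <;> decide

theorem stmt_18 :
    B = R * S ∧ C = S * R ∧ IsColumnSubdivision R ∧
    ¬ ∃ (v : Fin 2) (M₁ M₂ : Set (Fin 2)),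
        M₁.Nonempty ∧ M₂.Nonempty ∧ Disjoint M₁ M₂ ∧ M₁ ∪ M₂ = {w | B v w = 1} ∧
        ∃ τ : Fin 3 ≃ ({u : Fin 2 // u ≠ v} ⊕ Fin 2),
          ∀ i j, C i j = vertexExplosion B v M₁ M₂ (τ i) (τ j) := by
  refine ⟨by decide, by decide,
    ⟨fun i j => by fin_cases i <;> fin_cases j <;> simp [R], by decide⟩, ?_⟩
  rintro ⟨v, M₁, M₂, ⟨x, hx⟩, hM₂, hdisj, hunion, τ, hτ⟩
  have hv : v = 0 := by
    by_contra hv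
    have hBx : x ∈ M₁ ∪ M₂ := Or.inl hx
    rw [hunion] at hBx
    exact B_one_ne_one x (Fin.eq_one_of_ne_zero v hv ▸ hBx)
  subst hv
  have hB : ∀ u ≠ (0 : Fin 2), ∃ w, B u w = 0 := fun u hu =>
    ⟨0, by rw [Fin.eq_one_of_ne_zero u hu]; rfl⟩
  obtain ⟨j, hj⟩ := Matrix.exists_eq_zero_of_forall_exists_eq_zero_reindex τ hτ
    (vertexExplosion_exists_eq_zero B 0 M₁ M₂ hB ⟨x, hx⟩ hM₂ hdisj) 0
  revert j
  decide
end
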